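/- arXiv:1910.03268 — 2 statements merged into one kernel-verified Lean document; each statement's English description precedes it below -/
import Mathlib

section
/- Let η₅ ∈ [0,1), m > 0, and let Π₅ satisfy Π₅ > 2m/(1-η₅) (so that the leading coefficient a = (3/(1-η₅)²)·(Π₅ - 2m/(1-η₅)) is strictly positive). Let Π(η) = aη² + bη + c be the tail-off parabola with b = -Π₅/(1-η₅) - a(1+η₅) and c = -a - b. Then Π(η) > 0 for every η ∈ [η₅, 1) if and only if Π₅ ≤ 3m/(1-η₅); equivalently, the first (smallest) zero of Π on [η₅, ∞) equals 1 exactly when Π₅ ≤ 3m/(1-η₅), and when Π₅ > 3m/(1-η₅) the parabola has a zero strictly inside (η₅, 1). -/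
/-- First zero of the tail-off parabola: under `P₅ > 2m/(1-η₅)` (so `a > 0`),
the parabola is positive on `[η₅, 1)` iff `P₅ ≤ 3m/(1-η₅)`; equivalently, the
smallest zero of `P` on `[η₅, ∞)` equals `1` exactly when `P₅ ≤ 3m/(1-η₅)`,
and when `P₅ > 3m/(1-η₅)` the parabola has a zero strictly inside `(η₅, 1)`. -/
theorem stmt_3 (η₅ P₅ m : ℝ) (hη₅ : η₅ ∈ Set.Ico (0 : ℝ) 1) (hm : 0 < m)
    (a b c : ℝ)
    (ha : a = 3 / (1 - η₅) ^ 2 * (P₅ - 2 * m / (1 - η₅)))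
    (hb : b = -P₅ / (1 - η₅) - a * (1 + η₅))
    (hc : c = -a - b)
    (hP₅ : 2 * m / (1 - η₅) < P₅)
    (P : ℝ → ℝ) (hP : ∀ η, P η = a * η ^ 2 + b * η + c) :
    ((∀ η ∈ Set.Ico η₅ (1 : ℝ), 0 < P η) ↔ P₅ ≤ 3 * m / (1 - η₅)) ∧
    ((IsLeast {η | η ∈ Set.Ici η₅ ∧ P η = 0} 1) ↔ P₅ ≤ 3 * m / (1 - η₅)) ∧
    (3 * m / (1 - η₅) < P₅ → ∃ η ∈ Set.Ioo η₅ (1 : ℝ), P η = 0) := by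
  obtain ⟨hη0, hη1⟩ := hη₅
  have h1 : (0:ℝ) < 1 - η₅ := by linarith
  have hP₅pos : 0 < P₅ := lt_trans (by positivity) hP₅
  have ha0 : 0 < a := by
    rw [ha]
    have h2 : 0 < P₅ - 2 * m / (1 - η₅) := by linarith
    positivity
  obtain ⟨r, hr⟩ : ∃ r : ℝ, r = η₅ + P₅ / (a * (1 - η₅)) := ⟨_, rfl⟩
  have hrη : η₅ < r := by
    have : 0 < P₅ / (a * (1 - η₅)) := by positivity
    rw [hr]; linarith
  have hfac : ∀ η, P η = a * (η - 1) * (η - r) := by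
    intro η
    rw [hP, hc, hb, hr]
    field_simp
    ring
  have hK : 0 < a * (1 - η₅) := mul_pos ha0 h1
  have ha' : a * (1 - η₅) ^ 2 = 3 * P₅ - 6 * m / (1 - η₅) := by
    rw [ha]; field_simp; ring
  have hid : (r - 1) * (a * (1 - η₅)) = 2 * (3 * m / (1 - η₅) - P₅) := by
    have e1 : (η₅ + P₅ / (a * (1 - η₅)) - 1) * (a * (1 - η₅)) = P₅ - a * (1 - η₅) ^ 2 := by
      field_simp; ring
    rw [hr, e1, ha']; ring
  have hkey : P₅ ≤ 3 * m / (1 - η₅) ↔ 1 ≤ r := by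
    constructor
    · intro h; nlinarith [hid, hK]
    · intro h; nlinarith [hid, hK]
  have hkey' : 3 * m / (1 - η₅) < P₅ → r < 1 := by
    intro h; nlinarith [hid, hK]
  refine ⟨?_, ?_, ?_⟩
  · rw [hkey]
    constructor
    · intro h
      by_contra hlt
      push_neg at hlt
      have hmem : r ∈ Set.Ico η₅ (1:ℝ) := ⟨le_of_lt hrη, hlt⟩
      have := h r hmem
      rw [hfac r] at this
      simp at this
    · intro h η hmem
      obtain ⟨hη1', hη2'⟩ := hmem
      rw [hfac]
      have h3 : η - 1 < 0 := by linarith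
      have h4 : η - r < 0 := by linarith
      nlinarith [mul_pos ha0 (mul_pos_of_neg_of_neg h3 h4)]
  · rw [hkey]
    constructor
    · intro ⟨_, hlb⟩
      exact hlb ⟨le_of_lt hrη, by rw [hfac r]; ring⟩
    · intro h
      constructor
      · exact ⟨Set.mem_Ici.mpr hη1.le, by rw [hfac 1]; ring⟩
      · rintro η ⟨hη, hzero⟩
        rw [hfac] at hzero
        have : η - 1 = 0 ∨ η - r = 0 := by
          rcases mul_eq_zero.mp hzero with h' | h'
          · rcases mul_eq_zero.mp h' with h'' | h''
            · exact absurd h'' (ne_of_gt ha0)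
            · exact Or.inl h''
          · exact Or.inr h'
        rcases this with h' | h'
        · linarith
        · linarith
  · intro hgt
    have hrlt : r < 1 := hkey' hgt
    exact ⟨r, ⟨hrη, hrlt⟩, by rw [hfac r]; ring⟩
end

section
/- Let η₅ ∈ [0,1), m > 0, and let Π₅ satisfy 2m/(1-η₅) < Π₅ ≤ 3m/(1-η₅). Then the tail-off parabola Π(η) = aη² + bη + c with a = (3/(1-η₅)²)·(Π₅ - 2m/(1-η₅)), b = -Π₅/(1-η₅) - a(1+η₅), c = -a - b is monotonically nonincreasing on [η₅, 1] (and strictly decreasing on [η₅, 1) ): its vertex -b/(2a) lies at or beyond η = 1. -/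
/-- Monotonicity of the tail-off parabola: under `2m/(1-η₅) < P₅ ≤ 3m/(1-η₅)`,
the parabola is nonincreasing on `[η₅, 1]`, strictly decreasing on `[η₅, 1)`,
and its vertex `-b/(2a)` lies at or beyond `η = 1`. -/
theorem stmt_4 (η₅ P₅ m : ℝ) (hη₅ : η₅ ∈ Set.Ico (0 : ℝ) 1) (hm : 0 < m)
    (hP₅l : 2 * m / (1 - η₅) < P₅) (hP₅u : P₅ ≤ 3 * m / (1 - η₅))
    (a b c : ℝ)
    (ha : a = 3 / (1 - η₅) ^ 2 * (P₅ - 2 * m / (1 - η₅)))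
    (hb : b = -P₅ / (1 - η₅) - a * (1 + η₅))
    (hc : c = -a - b)
    (P : ℝ → ℝ) (hP : ∀ η, P η = a * η ^ 2 + b * η + c) :
    AntitoneOn P (Set.Icc η₅ 1) ∧ StrictAntiOn P (Set.Ico η₅ 1) ∧
    (1 : ℝ) ≤ -b / (2 * a) := by
  obtain ⟨h0, h1⟩ := hη₅
  have hpos : (0:ℝ) < 1 - η₅ := by linarith
  have hl : 2 * m < P₅ * (1 - η₅) := by
    rw [div_lt_iff₀ hpos] at hP₅l; linarith
  have hu : P₅ * (1 - η₅) ≤ 3 * m := by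
    rw [le_div_iff₀ hpos] at hP₅u; linarith
  have hapos : 0 < a := by
    rw [ha]
    apply mul_pos (by positivity)
    rw [sub_pos, div_lt_iff₀ hpos]; linarith
  have hab : 2 * a + b ≤ 0 := by
    have key : (2 * a + b) * (1 - η₅) ^ 2 = 2 * P₅ * (1 - η₅) - 6 * m := by
      rw [ha, hb, ha]; field_simp; ring
    nlinarith [key, mul_pos hpos hpos]
  have hstrict : StrictAntiOn P (Set.Icc η₅ 1) := by
    intro x hx y hy hxy
    rw [hP, hP]
    have hx1 : x < 1 := lt_of_lt_of_le hxy hy.2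
    have hsum : a * (x + y) + b < 0 := by nlinarith [hy.2]
    nlinarith [hsum, hxy]
  refine ⟨hstrict.antitoneOn, hstrict.mono Set.Ico_subset_Icc_self, ?_⟩
  rw [le_div_iff₀ (by linarith : (0:ℝ) < 2 * a)]
  linarith
end
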